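/- arXiv:1004.2894 — 2 statements merged into one kernel-verified Lean document; each statement's English description precedes it below -/
import Mathlib

section
/- Let f : Γ → ℝ be a homogeneous quasimorphism with defect D(f). Then D(f) = sup_{a,b∈Γ} |f([a,b])|, where [a,b] = aba⁻¹b⁻¹. -/
/-! Bavard's argument. Write `δ(a, b) = f (a * b) - f a - f b`, `D = sup |δ|` and
`C = sup |f ⁅x, y⁆|`. Homogeneity makes `f` conjugation invariant (the conjugation error `2D`
scales linearly under powers), so `f ⁅a, b⁆ = δ(a b a⁻¹, b⁻¹)` and `C ≤ D`.
Conversely, `w n = a⁻ⁿ (ba)ⁿ b⁻ⁿ` has `f (w n) ≥ n δ(a, b) - 2D`, while `w (n + 2)` is a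
conjugate of `w n` times a commutator, so `f (w (2m)) ≤ m (C + D)`. Letting `m → ∞` gives
`2δ(a, b) ≤ C + D`; together with `δ(b⁻¹, a⁻¹) = -δ(a, b)` this is `D ≤ (C + D) / 2`. -/

open scoped commutatorElement

lemma nonpos_of_forall_nat_mul_le {α : Type*} [Field α] [LinearOrder α] [IsStrictOrderedRing α]
    [Archimedean α] {t K : α} (h : ∀ m : ℕ, m * t ≤ K) : t ≤ 0 := by
  by_contra! ht
  obtain ⟨m, hm⟩ := exists_nat_gt (K / t)
  exact (h m).not_gt ((div_lt_iff₀ ht).mp hm)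

section Group

variable {G : Type*} [Group G]

def defectWord (a b : G) (n : ℕ) : G := (a ^ n)⁻¹ * (b * a) ^ n * (b ^ n)⁻¹

lemma exists_defectWord_add_two (a b : G) (n : ℕ) :
    ∃ x y : G, defectWord a b (n + 2) = x * defectWord a b n * x⁻¹ * ⁅x, y⁆ := by
  refine ⟨(a ^ (n + 2))⁻¹ * b * a ^ (n + 1), b ^ (n + 2) * a ^ (n + 1), ?_⟩
  rw [defectWord, defectWord, pow_succ (b * a) (n + 1), pow_succ' (b * a) n,
    commutatorElement_def]
  generalize (b * a) ^ n = X
  group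

def IsHomogeneous (f : G → ℝ) : Prop := ∀ (n : ℤ) (x : G), f (x ^ n) = n * f x

namespace IsHomogeneous

variable {f : G → ℝ} (hf : IsHomogeneous f)
include hf

lemma map_one : f 1 = 0 := by
  simpa using hf 0 1

lemma map_inv (x : G) : f x⁻¹ = -f x := by
  simpa using hf (-1) x

lemma map_pow (n : ℕ) (x : G) : f (x ^ n) = n * f x := by
  simpa using hf n x

variable {D : ℝ} (hD : ∀ a b : G, |f (a * b) - f a - f b| ≤ D)
include hD

lemma abs_map_conj_sub_le (g x : G) : |f (g * x * g⁻¹) - f x| ≤ 2 * D := by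
  have h₁ := abs_le.mp (hD g (x * g⁻¹))
  have h₂ := abs_le.mp (hD x g⁻¹)
  rw [← mul_assoc] at h₁
  rw [hf.map_inv] at h₂
  exact abs_le.mpr ⟨by linarith, by linarith⟩

lemma map_conj (g x : G) : f (g * x * g⁻¹) = f x := by
  have h : ∀ m : ℕ, m * |f (g * x * g⁻¹) - f x| ≤ 2 * D := fun m => by
    have := hf.abs_map_conj_sub_le hD g (x ^ m)
    rwa [← conj_pow, hf.map_pow, hf.map_pow, ← mul_sub, abs_mul, Nat.abs_cast] at this
  have := nonpos_of_forall_nat_mul_le h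
  linarith [abs_nonpos_iff.mp this]

lemma map_mul_comm (a b : G) : f (b * a) = f (a * b) := by
  simpa using hf.map_conj hD a⁻¹ (a * b)

lemma abs_map_commutator_le (a b : G) : |f ⁅a, b⁆| ≤ D := by
  have h := hD (a * b * a⁻¹) b⁻¹
  rwa [hf.map_conj hD, hf.map_inv, sub_neg_eq_add, sub_add_cancel, ← commutatorElement_def] at h

lemma nat_mul_defect_sub_le_map_defectWord (a b : G) (n : ℕ) :
    n * (f (a * b) - f a - f b) - 2 * D ≤ f (defectWord a b n) := by
  have h₁ := (abs_le.mp (hD ((a ^ n)⁻¹ * (b * a) ^ n) (b ^ n)⁻¹)).1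
  have h₂ := (abs_le.mp (hD (a ^ n)⁻¹ ((b * a) ^ n))).1
  rw [hf.map_inv, hf.map_pow] at h₁ h₂
  rw [hf.map_pow, hf.map_mul_comm hD a b] at h₂
  rw [defectWord]
  linarith

variable {C : ℝ} (hC : ∀ x y : G, f ⁅x, y⁆ ≤ C)
include hC

lemma map_defectWord_add_two_le (a b : G) (n : ℕ) :
    f (defectWord a b (n + 2)) ≤ f (defectWord a b n) + (C + D) := by
  obtain ⟨x, y, hxy⟩ := exists_defectWord_add_two a b n
  have h := (abs_le.mp (hD (x * defectWord a b n * x⁻¹) ⁅x, y⁆)).2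
  rw [← hxy, hf.map_conj hD] at h
  linarith [hC x y]

lemma map_defectWord_two_mul_le (a b : G) (m : ℕ) :
    f (defectWord a b (2 * m)) ≤ m * (C + D) := by
  induction m with
  | zero => simp [defectWord, hf.map_one]
  | succ k ih =>
    have := hf.map_defectWord_add_two_le hD hC a b (2 * k)
    rw [show 2 * (k + 1) = 2 * k + 2 by ring]
    push_cast
    linarith

lemma two_mul_defect_le (a b : G) : 2 * (f (a * b) - f a - f b) ≤ C + D := by
  have h : ∀ m : ℕ, m * (2 * (f (a * b) - f a - f b) - (C + D)) ≤ 2 * D := fun m => by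
    have h₁ := hf.nat_mul_defect_sub_le_map_defectWord hD a b (2 * m)
    have h₂ := hf.map_defectWord_two_mul_le hD hC a b m
    push_cast at h₁
    linarith
  linarith [nonpos_of_forall_nat_mul_le h]

lemma abs_defect_le_half (a b : G) : |f (a * b) - f a - f b| ≤ (C + D) / 2 := by
  have h := hf.two_mul_defect_le hD hC b⁻¹ a⁻¹
  rw [← mul_inv_rev, hf.map_inv, hf.map_inv, hf.map_inv] at h
  exact abs_le.mpr ⟨by linarith, by linarith [hf.two_mul_defect_le hD hC a b]⟩

end IsHomogeneous

end Group

/-- The defect of a homogeneous quasimorphism `f` equals `sup_{a,b} |f([a,b])|`,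
where `[a,b] = a * b * a⁻¹ * b⁻¹`. -/
theorem defect_eq_sup_commutator {Γ : Type*} [Group Γ] (f : Γ → ℝ)
    (hbdd : BddAbove (Set.range fun p : Γ × Γ => |f (p.1 * p.2) - f p.1 - f p.2|))
    (hhom : ∀ (n : ℤ) (x : Γ), f (x ^ n) = n * f x) :
    (⨆ p : Γ × Γ, |f (p.1 * p.2) - f p.1 - f p.2|) = ⨆ p : Γ × Γ, |f ⁅p.1, p.2⁆| := by
  set D := ⨆ p : Γ × Γ, |f (p.1 * p.2) - f p.1 - f p.2|
  set C := ⨆ p : Γ × Γ, |f ⁅p.1, p.2⁆|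
  have hf : IsHomogeneous f := hhom
  have hD : ∀ a b : Γ, |f (a * b) - f a - f b| ≤ D := fun a b => le_ciSup hbdd (a, b)
  have hCbdd : BddAbove (Set.range fun p : Γ × Γ => |f ⁅p.1, p.2⁆|) :=
    ⟨D, Set.forall_mem_range.2 fun p => hf.abs_map_commutator_le hD p.1 p.2⟩
  have hC : ∀ a b : Γ, f ⁅a, b⁆ ≤ C := fun a b => (le_abs_self _).trans (le_ciSup hCbdd (a, b))
  have hCD : C ≤ D := ciSup_le fun p => hf.abs_map_commutator_le hD p.1 p.2
  have hDC : D ≤ (C + D) / 2 := ciSup_le fun p => hf.abs_defect_le_half hD hC p.1 p.2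
  linarith
end

section
/- Let f : Γ → ℝ be a homogeneous quasimorphism with defect D(f), and suppose γ ∈ Γ is a product of g commutators, γ = ∏_{i=1}^g [aᵢ, bᵢ]. Then |f(γ)| ≤ (2g−1)·D(f). -/
/-!
A homogeneous quasimorphism is conjugation invariant: `f (x yⁿ x⁻¹)` and `f (yⁿ)` differ by at
most `2D` for every `n`, while homogeneity makes this difference `n` times
`f (x y x⁻¹) - f y`. Writing `⁅u, v⁆ = (u v u⁻¹) v⁻¹`, conjugation invariance and `f v⁻¹ = -f v`
give `|f ⁅u, v⁆| ≤ D`. Splitting a product of `g` commutators one factor at a time costs one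
further `D` per multiplication, `g - 1` in all.
-/

open scoped commutatorElement

theorem eq_zero_of_forall_nat_mul_abs_le {c C : ℝ} (h : ∀ n : ℕ, n * |c| ≤ C) : c = 0 := by
  by_contra hc
  have hc' : 0 < |c| := abs_pos.mpr hc
  obtain ⟨n, hn⟩ := exists_nat_gt (C / |c|)
  have := h n
  rw [div_lt_iff₀ hc'] at hn
  linarith

namespace Quasimorphism

variable {G : Type*} [Group G] {f : G → ℝ} {D : ℝ}

theorem map_inv_of_zpow (hhom : ∀ (n : ℤ) (x : G), f (x ^ n) = n * f x) (x : G) :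
    f x⁻¹ = -f x := by
  simpa using hhom (-1) x

theorem abs_map_conj_sub_le (hdef : ∀ a b : G, |f (a * b) - f a - f b| ≤ D)
    (hinv : ∀ x : G, f x⁻¹ = -f x) (x y : G) :
    |f (x * y * x⁻¹) - f y| ≤ 2 * D := by
  have h₁ := hdef x (y * x⁻¹)
  have h₂ := hdef y x⁻¹
  rw [hinv] at h₂
  rw [← mul_assoc] at h₁
  calc |f (x * y * x⁻¹) - f y|
      = |(f (x * y * x⁻¹) - f x - f (y * x⁻¹)) + (f (y * x⁻¹) - f y - -f x)| := by ring_nf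
    _ ≤ 2 * D := by linarith [abs_add_le (f (x * y * x⁻¹) - f x - f (y * x⁻¹))
                      (f (y * x⁻¹) - f y - -f x)]

theorem map_conj (hdef : ∀ a b : G, |f (a * b) - f a - f b| ≤ D)
    (hhom : ∀ (n : ℤ) (x : G), f (x ^ n) = n * f x) (x y : G) :
    f (x * y * x⁻¹) = f y := by
  refine sub_eq_zero.mp (eq_zero_of_forall_nat_mul_abs_le (C := 2 * D) fun n => ?_)
  have h := abs_map_conj_sub_le hdef (map_inv_of_zpow hhom) x (y ^ (n : ℤ))
  rwa [← conj_zpow, hhom, hhom, ← mul_sub, abs_mul, Int.cast_natCast, Nat.abs_cast] at h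

theorem abs_map_commutatorElement_le (hdef : ∀ a b : G, |f (a * b) - f a - f b| ≤ D)
    (hhom : ∀ (n : ℤ) (x : G), f (x ^ n) = n * f x) (u v : G) :
    |f ⁅u, v⁆| ≤ D := by
  have h := hdef (u * v * u⁻¹) v⁻¹
  rw [map_conj hdef hhom, map_inv_of_zpow hhom, ← commutatorElement_def] at h
  simpa using h

theorem abs_map_list_prod_le (hdef : ∀ a b : G, |f (a * b) - f a - f b| ≤ D)
    {L : List G} (hL : L ≠ []) (hbound : ∀ x ∈ L, |f x| ≤ D) :
    |f L.prod| ≤ (2 * L.length - 1) * D := by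
  induction L with
  | nil => exact absurd rfl hL
  | cons x L ih =>
    have hx := hbound x List.mem_cons_self
    rcases eq_or_ne L [] with rfl | hL'
    · norm_num [hx]
    have htail := ih hL' fun y hy => hbound y (List.mem_cons_of_mem x hy)
    have hsplit : |f (x * L.prod)| ≤ |f x| + |f L.prod| + D := by
      have := hdef x L.prod
      calc |f (x * L.prod)| = |(f (x * L.prod) - f x - f L.prod) + f x + f L.prod| := by ring_nf
        _ ≤ |f (x * L.prod) - f x - f L.prod| + |f x| + |f L.prod| :=
          (abs_add_le _ _).trans (add_le_add_left (abs_add_le _ _) _)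
        _ ≤ |f x| + |f L.prod| + D := by linarith
    rw [List.prod_cons, List.length_cons]
    push_cast
    linarith

end Quasimorphism

/-- If `f` is a homogeneous quasimorphism with defect at most `D` and `γ` is a product of
`g` commutators (`g ≥ 1`), `γ = [a₁,b₁]⋯[a_g,b_g]`, then `|f γ| ≤ (2g − 1) · D`. -/
theorem homogeneous_quasimorphism_bound_on_commutator_product {Γ : Type*} [Group Γ]
    (f : Γ → ℝ) (D : ℝ)
    (hdef : ∀ a b : Γ, |f (a * b) - f a - f b| ≤ D)
    (hhom : ∀ (n : ℤ) (x : Γ), f (x ^ n) = n * f x)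
    (g : ℕ) (hg : 1 ≤ g) (a b : Fin g → Γ) (γ : Γ)
    (hγ : γ = (List.ofFn fun i : Fin g => ⁅a i, b i⁆).prod) :
    |f γ| ≤ (2 * g - 1 : ℝ) * D := by
  have hne : (List.ofFn fun i : Fin g => ⁅a i, b i⁆) ≠ [] := by
    rw [Ne, List.ofFn_eq_nil_iff]
    omega
  have h := Quasimorphism.abs_map_list_prod_le hdef hne fun x hx => by
    obtain ⟨i, rfl⟩ := List.mem_ofFn.mp hx
    exact Quasimorphism.abs_map_commutatorElement_le hdef hhom (a i) (b i)
  rwa [List.length_ofFn, ← hγ] at h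
end
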